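/- If G is dynamically ℓ-minimal in a hereditary graph class F and ℓ ≥ 5, then no two vertices of degree 2 in G are adjacent. -/

import Mathlib

open Finset

open scoped Classical in
noncomputable def deg {V : Type*} [Fintype V] (G : SimpleGraph V) (v : V) : ℕ :=
  (Finset.univ.filter (fun u => G.Adj v u)).card

def IsProper {V : Type*} (G : SimpleGraph V) (c : V → ℕ) : Prop :=
  ∀ u v, G.Adj u v → c u ≠ c v

def IsDynamic {V : Type*} [Fintype V] (G : SimpleGraph V) (c : V → ℕ) : Prop :=
  IsProper G c ∧ ∀ v, 2 ≤ deg G v → ∃ a b, G.Adj v a ∧ G.Adj v b ∧ c a ≠ c b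

noncomputable def chrom {V : Type*} (G : SimpleGraph V) : ℕ :=
  sInf {n | ∃ c : V → ℕ, (∀ v, c v < n) ∧ IsProper G c}

noncomputable def dynChrom {V : Type*} [Fintype V] (G : SimpleGraph V) : ℕ :=
  sInf {n | ∃ c : V → ℕ, (∀ v, c v < n) ∧ IsDynamic G c}

def subdiv {V : Type*} (G : SimpleGraph V) : SimpleGraph (V ⊕ G.edgeSet) where
  Adj x y :=
    match x, y with
    | Sum.inl u, Sum.inr e => u ∈ (e : Sym2 V)
    | Sum.inr e, Sum.inl u => u ∈ (e : Sym2 V)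
    | _, _ => False
  symm := ⟨by rintro (u | e) (v | f) h <;> first | exact h | exact h.elim⟩
  loopless := ⟨by rintro (u | e) h <;> exact h⟩

noncomputable instance {V : Type*} [Fintype V] (G : SimpleGraph V) : Fintype G.edgeSet :=
  Fintype.ofFinite _

def Choosable {V : Type*} (G : SimpleGraph V) (ℓ : ℕ) : Prop :=
  ∀ L : V → Finset ℕ, (∀ v, (L v).card = ℓ) →
    ∃ c : V → ℕ, (∀ v, c v ∈ L v) ∧ IsProper G c

def DynChoosable {V : Type*} [Fintype V] (G : SimpleGraph V) (ℓ : ℕ) : Prop :=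
  ∀ L : V → Finset ℕ, (∀ v, (L v).card = ℓ) →
    ∃ c : V → ℕ, (∀ v, c v ∈ L v) ∧ IsDynamic G c

noncomputable def listChrom {V : Type*} (G : SimpleGraph V) : ℕ :=
  sInf {ℓ | Choosable G ℓ}

noncomputable def dynListChrom {V : Type*} [Fintype V] (G : SimpleGraph V) : ℕ :=
  sInf {ℓ | DynChoosable G ℓ}

open scoped Classical in
noncomputable def nedges {n : ℕ} (G : SimpleGraph (Fin n)) : ℕ :=
  (Finset.univ.filter (fun e : Sym2 (Fin n) => e ∈ G.edgeSet)).card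

noncomputable def gsize {n : ℕ} (G : SimpleGraph (Fin n)) : ℕ := n + nedges G

/-- `F` is hereditary: it is closed under taking subgraphs (up to isomorphism). -/
def Hereditary (F : ∀ n : ℕ, SimpleGraph (Fin n) → Prop) : Prop :=
  ∀ (n m : ℕ) (G : SimpleGraph (Fin n)) (H : SimpleGraph (Fin m)),
    F n G → (∃ f : Fin m ↪ Fin n, ∀ u v, H.Adj u v → G.Adj (f u) (f v)) → F m H

/-- `G` is dynamically `ℓ`-minimal in the class `F`. -/
def DynMinimal (F : ∀ n : ℕ, SimpleGraph (Fin n) → Prop) (ℓ : ℕ)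
    {n : ℕ} (G : SimpleGraph (Fin n)) : Prop :=
  F n G ∧ ¬ DynChoosable G ℓ ∧
    ∀ (m : ℕ) (H : SimpleGraph (Fin m)), F m H → gsize H < gsize G → DynChoosable H ℓ

/-! Delete the edges at the two adjacent degree-2 vertices `u` and `v`. The smaller graph lies in
`F`, so for any lists it has a dynamic colouring, which we keep and complete at `u` and `v`: the new
colour of `v` avoids three colours (those of `u'`, `v'` and of a second neighbour of `v'`, where `u'`
and `v'` are the other neighbours of `u` and `v`), and the colour of `u` avoids four (the new colour
of `v`, those of `u'`, `v'` and of a second neighbour of `u'`). Hence lists of size `5` suffice. -/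

open Function SimpleGraph

variable {V : Type*} {G H : SimpleGraph V}

section Degree

variable [Fintype V]

open scoped Classical in
lemma deg_eq_degree (G : SimpleGraph V) [DecidableRel G.Adj] (v : V) : deg G v = G.degree v := by
  rw [deg, ← card_neighborFinset_eq_degree, neighborFinset_eq_filter]
  congr

lemma deg_congr {w : V} (h : ∀ x, G.Adj w x ↔ H.Adj w x) : deg G w = deg H w := by
  classical
  simp only [deg_eq_degree, ← card_neighborFinset_eq_degree]
  congr 1
  ext x
  simp [h]

lemma exists_adj_ne_of_two_le_deg {x : V} (h : 2 ≤ deg G x) (y : V) : ∃ z, G.Adj x z ∧ z ≠ y := by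
  classical
  rw [deg_eq_degree, ← card_neighborFinset_eq_degree] at h
  simpa using (G.neighborFinset x).exists_mem_ne h y

lemma exists_adj_iff_of_deg_eq_two {u v : V} (huv : G.Adj u v) (hu : deg G u = 2) :
    ∃ u', u' ≠ v ∧ ∀ x, G.Adj u x ↔ x = v ∨ x = u' := by
  classical
  rw [deg_eq_degree, ← card_neighborFinset_eq_degree, card_eq_two] at hu
  obtain ⟨p, q, hpq, hN⟩ := hu
  have hadj : ∀ x, G.Adj u x ↔ x = p ∨ x = q := by
    intro x
    rw [← mem_neighborFinset, hN]
    simp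
  rcases (hadj v).1 huv with rfl | rfl
  · exact ⟨q, hpq.symm, hadj⟩
  · exact ⟨p, hpq, fun x => (hadj x).trans or_comm⟩

end Degree

section Recolor

variable [DecidableEq V] {u v u' v' : V} {c : V → ℕ} {a b : ℕ}

lemma isProper_update_update (hu : ∀ x, G.Adj u x ↔ x = v ∨ x = u')
    (hv : ∀ x, G.Adj v x ↔ x = u ∨ x = v')
    (hc : IsProper ((G.deleteIncidenceSet u).deleteIncidenceSet v) c)
    (hab : a ≠ b) (hau' : a ≠ c u') (hbv' : b ≠ c v') :
    IsProper G (update (update c v b) u a) := by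
  intro x y hxy
  have := hc x y
  have := G.ne_of_adj hxy
  have := hxy.symm
  simp only [deleteIncidenceSet_adj, update_apply] at *
  grind

lemma exists_adj_ne_update_update [Fintype V] (hu : ∀ x, G.Adj u x ↔ x = v ∨ x = u')
    (hv : ∀ x, G.Adj v x ↔ x = u ∨ x = v') (hu'v : u' ≠ v) (hv'u : v' ≠ u)
    (hc : IsDynamic ((G.deleteIncidenceSet u).deleteIncidenceSet v) c)
    (hab : a ≠ b) (hbu' : b ≠ c u') (hav' : a ≠ c v')
    {x₀ y₀ : V} (hx₀ : 2 ≤ deg G u' → G.Adj u' x₀ ∧ x₀ ≠ u) (hax₀ : a ≠ c x₀)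
    (hy₀ : 2 ≤ deg G v' → G.Adj v' y₀ ∧ y₀ ≠ v) (hby₀ : b ≠ c y₀) {w : V} (hw : 2 ≤ deg G w) :
    ∃ p q, G.Adj w p ∧ G.Adj w q ∧ update (update c v b) u a p ≠ update (update c v b) u a q := by
  have huv : u ≠ v := G.ne_of_adj ((hu v).2 (.inl rfl))
  have hu'u : u' ≠ u := (G.ne_of_adj ((hu u').2 (.inr rfl))).symm
  have hv'v : v' ≠ v := (G.ne_of_adj ((hv v').2 (.inr rfl))).symm
  by_cases hwu : w = u
  · subst hwu
    exact ⟨v, u', (hu v).2 (.inl rfl), (hu u').2 (.inr rfl),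
      by simpa [update_apply, huv.symm, hu'u, hu'v] using hbu'⟩
  by_cases hwv : w = v
  · subst hwv
    exact ⟨u, v', (hv u).2 (.inl rfl), (hv v').2 (.inr rfl),
      by simpa [update_apply, hv'u, hv'v] using hav'⟩
  by_cases hwu' : w = u'
  · subst hwu'
    obtain ⟨hx₀, hx₀u⟩ := hx₀ hw
    refine ⟨u, x₀, ((hu w).2 (.inr rfl)).symm, hx₀, ?_⟩
    simp only [update_apply]
    grind
  by_cases hwv' : w = v'
  · subst hwv'
    obtain ⟨hy₀, hy₀v⟩ := hy₀ hw
    refine ⟨v, y₀, ((hv w).2 (.inr rfl)).symm, hy₀, ?_⟩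
    simp only [update_apply]
    grind
  have hN : ∀ x, G.Adj w x ↔ ((G.deleteIncidenceSet u).deleteIncidenceSet v).Adj w x := by
    intro x
    have := hu w
    have := hv w
    simp only [deleteIncidenceSet_adj]
    grind [G.adj_symm]
  obtain ⟨p, q, hp, hq, hpq⟩ := hc.2 w (deg_congr hN ▸ hw)
  simp only [deleteIncidenceSet_adj] at hp hq
  exact ⟨p, q, hp.1.1, hq.1.1, by simpa [update_apply, hp.1.2.2, hp.2.2, hq.1.2.2, hq.2.2]⟩

end Recolor

lemma deleteIncidenceSet_deleteIncidenceSet_lt {u v : V} (huv : G.Adj u v) :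
    (G.deleteIncidenceSet u).deleteIncidenceSet v < G := by
  have hnadj : ¬((G.deleteIncidenceSet u).deleteIncidenceSet v).Adj u v := by
    simp [deleteIncidenceSet_adj]
  exact ((deleteIncidenceSet_le _ v).trans (deleteIncidenceSet_le G u)).lt_of_ne
    fun h => hnadj (by rwa [h])

theorem DynChoosable.of_deleteIncidenceSet_of_deg_eq_two [Fintype V] {ℓ : ℕ} (hℓ : 5 ≤ ℓ)
    {u v : V} (huv : G.Adj u v) (hu : deg G u = 2) (hv : deg G v = 2)
    (hH : DynChoosable ((G.deleteIncidenceSet u).deleteIncidenceSet v) ℓ) :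
    DynChoosable G ℓ := by
  classical
  obtain ⟨u', hu'v, hu⟩ := exists_adj_iff_of_deg_eq_two huv hu
  obtain ⟨v', hv'u, hv⟩ := exists_adj_iff_of_deg_eq_two huv.symm hv
  obtain ⟨x₀, hx₀⟩ : ∃ x₀, 2 ≤ deg G u' → G.Adj u' x₀ ∧ x₀ ≠ u := by
    by_cases h : 2 ≤ deg G u'
    · exact (exists_adj_ne_of_two_le_deg h u).imp fun _ hx _ => hx
    · exact ⟨u, fun h' => absurd h' h⟩
  obtain ⟨y₀, hy₀⟩ : ∃ y₀, 2 ≤ deg G v' → G.Adj v' y₀ ∧ y₀ ≠ v := by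
    by_cases h : 2 ≤ deg G v'
    · exact (exists_adj_ne_of_two_le_deg h v).imp fun _ hy _ => hy
    · exact ⟨v, fun h' => absurd h' h⟩
  intro L hL
  obtain ⟨c, hcL, hc⟩ := hH L hL
  obtain ⟨b, hbL, hb⟩ := exists_mem_notMem_of_card_lt_card (s := {c u', c v', c y₀}) (t := L v)
    (by grind [card_le_three])
  obtain ⟨a, haL, ha⟩ := exists_mem_notMem_of_card_lt_card (s := {b, c u', c v', c x₀}) (t := L u)
    (by grind [card_le_four])
  simp only [mem_insert, mem_singleton, not_or] at ha hb
  refine ⟨update (update c v b) u a, fun x => ?_,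
    isProper_update_update hu hv hc.1 ha.1 ha.2.1 hb.2.1, fun w hw =>
      exists_adj_ne_update_update hu hv hu'v hv'u hc ha.1 hb.1 ha.2.2.1 hx₀ ha.2.2.2 hy₀ hb.2.2 hw⟩
  simp only [update_apply]
  split_ifs with hxu hxv
  · exact hxu ▸ haL
  · exact hxv ▸ hbL
  · exact hcL x

open scoped Classical in
lemma nedges_eq_ncard {n : ℕ} (G : SimpleGraph (Fin n)) : nedges G = G.edgeSet.ncard := by
  rw [nedges, Set.ncard_eq_toFinset_card']
  congr
  ext
  simp

lemma gsize_lt_gsize {n : ℕ} {G H : SimpleGraph (Fin n)} (h : H < G) : gsize H < gsize G := by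
  have := Set.ncard_lt_ncard (edgeSet_ssubset_edgeSet.2 h) (Set.toFinite _)
  simp only [gsize, nedges_eq_ncard]
  omega

lemma DynMinimal.dynChoosable_of_lt {F : ∀ n : ℕ, SimpleGraph (Fin n) → Prop} {ℓ n : ℕ}
    {G H : SimpleGraph (Fin n)} (hF : Hereditary F) (hG : DynMinimal F ℓ G) (h : H < G) :
    DynChoosable H ℓ :=
  hG.2.2 n H (hF n n G H hG.1 ⟨Function.Embedding.refl _, fun _ _ hxy => h.le hxy⟩)
    (gsize_lt_gsize h)

theorem dynMinimal_no_adjacent_two_vertices (F : ∀ n : ℕ, SimpleGraph (Fin n) → Prop)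
    (hF : Hereditary F) (ℓ : ℕ) (hl : 5 ≤ ℓ) {n : ℕ} (G : SimpleGraph (Fin n))
    (hG : DynMinimal F ℓ G) :
    ∀ u v, G.Adj u v → ¬(deg G u = 2 ∧ deg G v = 2) := by
  rintro u v huv ⟨hu, hv⟩
  exact hG.2.1 <| .of_deleteIncidenceSet_of_deg_eq_two hl huv hu hv
    (hG.dynChoosable_of_lt hF (deleteIncidenceSet_deleteIncidenceSet_lt huv))
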